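/- Let H^(1),…,H^(k) be finite-dimensional complex Hilbert spaces and let a be a Hermitian operator on H^(1)⊗…⊗H^(k). Then a satisfies Tr(a ϱ) ≥ 0 for all separable states ϱ, with a not vanishing on all separable states, if and only if the following two conditions hold: (1) there exists a pure product state p with Tr(a p) > 0; and (2) for every pure product state q with Tr(a q) = 0, C(q) ⊆ I_a. -/

import Mathlib

open Matrix
open scoped ComplexOrder

namespace EWitness

/-- Operators on the tensor product `H⁽¹⁾ ⊗ ⋯ ⊗ H⁽ᵏ⁾` of finite-dimensional complex
Hilbert spaces (with `dim H⁽ⁱ⁾ = n i`), modeled as matrices indexed by tuples. -/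
abbrev Op {k : ℕ} (n : Fin k → ℕ) := Matrix (∀ i, Fin (n i)) (∀ i, Fin (n i)) ℂ

/-- Tensor (Kronecker) product of one operator per tensor factor. -/
def tensorOp {k : ℕ} (n : Fin k → ℕ) (A : ∀ i, Matrix (Fin (n i)) (Fin (n i)) ℂ) : Op n :=
  Matrix.of fun x y => ∏ i, A i (x i) (y i)

/-- Tensor product of one vector per tensor factor. -/
def tensorVec {k : ℕ} (n : Fin k → ℕ) (v : ∀ i, Fin (n i) → ℂ) : (∀ i, Fin (n i)) → ℂ :=
  fun x => ∏ i, v i (x i)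

/-- The rank one projector `|v⟩⟨v|`. -/
def proj {m : Type*} (v : m → ℂ) : Matrix m m ℂ := Matrix.vecMulVec v (star v)

/-- The trace inner product `(a,b) = Tr(a† b)` (its real part; on the real vector space of
Hermitian operators this is exactly the trace inner product, which is real-valued there). -/
noncomputable def tinner {m : Type*} [Fintype m] (a b : Matrix m m ℂ) : ℝ :=
  ((aᴴ * b).trace).re

/-- A state: a positive semidefinite trace-one operator. -/
noncomputable def IsState {m : Type*} [Fintype m] (ρ : Matrix m m ℂ) : Prop :=
  ρ.PosSemidef ∧ ρ.trace = 1

/-- A pure product state `⊗ᵢ |e⁽ⁱ⁾⟩⟨e⁽ⁱ⁾|` with the `e⁽ⁱ⁾` unit vectors. -/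
def IsPureProduct {k : ℕ} (n : Fin k → ℕ) (p : Op n) : Prop :=
  ∃ e : ∀ i, Fin (n i) → ℂ,
    (∀ i, star (e i) ⬝ᵥ e i = 1) ∧ p = tensorOp n fun i => proj (e i)

/-- A separable state: a finite convex combination of tensor products of states. -/
noncomputable def IsSeparable {k : ℕ} (n : Fin k → ℕ) (ϱ : Op n) : Prop :=
  ∃ (N : ℕ) (w : Fin N → ℝ) (ρ : Fin N → ∀ i, Matrix (Fin (n i)) (Fin (n i)) ℂ),
    (∀ j, 0 ≤ w j) ∧ ((∑ j, w j) = 1) ∧ (∀ j i, IsState (ρ j i)) ∧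
    ϱ = ∑ j, (w j : ℂ) • tensorOp n (ρ j)

/-- The generating set of `τ⁽ⁱ⁾`: operators `I ⊗ ⋯ ⊗ h⁽ⁱ⁾ ⊗ ⋯ ⊗ I`
with `h⁽ⁱ⁾` Hermitian and traceless. -/
def tauGen {k : ℕ} (n : Fin k → ℕ) (i : Fin k) : Set (Op n) :=
  {T | ∃ h : Matrix (Fin (n i)) (Fin (n i)) ℂ, h.IsHermitian ∧ h.trace = 0 ∧
      T = tensorOp n (Function.update (fun j => (1 : Matrix (Fin (n j)) (Fin (n j)) ℂ)) i h)}

/-- `τ⁽ⁱ⁾`: the real span of operators `I ⊗ ⋯ ⊗ h⁽ⁱ⁾ ⊗ ⋯ ⊗ I`. -/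
noncomputable def tauComp {k : ℕ} (n : Fin k → ℕ) (i : Fin k) : Submodule ℝ (Op n) :=
  Submodule.span ℝ (tauGen n i)

/-- `τ = span(⋃ᵢ τ⁽ⁱ⁾)`. -/
noncomputable def tau {k : ℕ} (n : Fin k → ℕ) : Submodule ℝ (Op n) :=
  Submodule.span ℝ (⋃ i, tauGen n i)

/-- The separable tangent space `C(p) = {i[p,t] : t ∈ τ}`. -/
def sepTangent {k : ℕ} (n : Fin k → ℕ) (p : Op n) : Set (Op n) :=
  {x | ∃ t ∈ tau n, x = Complex.I • (p * t - t * p)}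

/-- Condition (★): for every pure product state `p` orthogonal to `a`, the separable tangent
space `C(p)` is contained in the hyperplane `I_a = {x : (x,a) = 0}`. -/
def StarCond {k : ℕ} (n : Fin k → ℕ) (a : Op n) : Prop :=
  ∀ p : Op n, IsPureProduct n p → tinner a p = 0 →
    sepTangent n p ⊆ {x : Op n | tinner x a = 0}

/-- An operator is supported on a subspace `W` if it vanishes on the orthogonal
complement of `W` and its range is contained in `W`. -/
def SupportedOn {m : Type*} [Fintype m] (W : Submodule ℂ (m → ℂ)) (M : Matrix m m ℂ) : Prop :=
  (∀ v, M.mulVec v ∈ W) ∧ (∀ v, (∀ w ∈ W, star w ⬝ᵥ v = 0) → M.mulVec v = 0)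


set_option linter.unusedSectionVars false
set_option linter.unusedVariables false

section Basic
variable {m : Type*} [Fintype m]

lemma conj_dot_mulVec {a : Matrix m m ℂ} (ha : a.IsHermitian) (u v : m → ℂ) :
    (starRingEnd ℂ) (star u ⬝ᵥ a.mulVec v) = star v ⬝ᵥ a.mulVec u := by
  simp only [dotProduct, mulVec, Pi.star_apply, map_sum, _root_.map_mul, Finset.mul_sum]
  rw [Finset.sum_comm]
  refine Finset.sum_congr rfl fun x _ => Finset.sum_congr rfl fun y _ => ?_
  have h1 : a x y = (starRingEnd ℂ) (a y x) := by
    conv_lhs => rw [← ha]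
    simp [conjTranspose_apply]
  rw [h1]
  simp only [Complex.star_def, Complex.conj_conj]
  ring

lemma dot_self_eq (z : m → ℂ) : star z ⬝ᵥ z = ((∑ x, Complex.normSq (z x) : ℝ) : ℂ) := by
  push_cast
  simp [dotProduct, ← Complex.normSq_eq_conj_mul_self]

lemma dot_self_re_nonneg (z : m → ℂ) : 0 ≤ (star z ⬝ᵥ z).re := by
  rw [dot_self_eq]
  simp only [Complex.ofReal_re]
  exact Finset.sum_nonneg fun x _ => Complex.normSq_nonneg _

/-- trace of `proj g * M` -/
lemma trace_proj_mul (g : m → ℂ) (M : Matrix m m ℂ) :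
    (proj g * M).trace = star g ⬝ᵥ M.mulVec g := by
  simp only [proj, trace, diag, mul_apply, vecMulVec_apply, dotProduct, mulVec,
    Pi.star_apply]
  rw [Finset.sum_comm]
  exact Finset.sum_congr rfl fun x _ => by rw [Finset.mul_sum]; exact Finset.sum_congr rfl fun y _ => by ring

lemma tinner_proj {a : Matrix m m ℂ} (ha : a.IsHermitian) (g : m → ℂ) :
    tinner a (proj g) = (star g ⬝ᵥ a.mulVec g).re := by
  rw [tinner, ha, trace_mul_comm, trace_proj_mul]

lemma proj_isHermitian (g : m → ℂ) : (proj g).IsHermitian := by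
  ext x y
  simp [proj, conjTranspose_apply, vecMulVec_apply, mul_comm]

lemma proj_posSemidef (g : m → ℂ) : (proj g).PosSemidef := by
  have : proj g = replicateCol (Fin 1) g * (replicateCol (Fin 1) g)ᴴ := by
    ext x y
    simp [proj, mul_apply, replicateCol, conjTranspose_apply, vecMulVec_apply]
  rw [this]
  exact posSemidef_self_mul_conjTranspose _

lemma proj_trace (g : m → ℂ) : (proj g).trace = star g ⬝ᵥ g := by
  simp [proj, trace, diag, vecMulVec_apply, dotProduct, mul_comm]

end Basic
section Tensor
variable {k : ℕ} {n : Fin k → ℕ}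

lemma tensorVec_update_apply (e : ∀ i, Fin (n i) → ℂ) (i : Fin k) (z : Fin (n i) → ℂ)
    (x : ∀ i, Fin (n i)) :
    tensorVec n (Function.update e i z) x = z (x i) * ∏ j ∈ Finset.univ.erase i, e j (x j) := by
  have h : (fun j => (Function.update e i z) j (x j))
      = Function.update (fun j => e j (x j)) i (z (x i)) := by
    funext j
    by_cases hj : j = i
    · subst hj; simp
    · simp [Function.update_of_ne hj]
  rw [tensorVec, h, Finset.prod_update_of_mem (Finset.mem_univ i), Finset.erase_eq]

lemma tensorVec_update_add (e : ∀ i, Fin (n i) → ℂ) (i : Fin k) (z z' : Fin (n i) → ℂ) :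
    tensorVec n (Function.update e i (z + z'))
      = tensorVec n (Function.update e i z) + tensorVec n (Function.update e i z') := by
  funext x
  simp only [tensorVec_update_apply, Pi.add_apply]
  ring

lemma tensorVec_update_smul (e : ∀ i, Fin (n i) → ℂ) (i : Fin k) (c : ℂ) (z : Fin (n i) → ℂ) :
    tensorVec n (Function.update e i (c • z)) = c • tensorVec n (Function.update e i z) := by
  funext x
  simp only [tensorVec_update_apply, Pi.smul_apply, smul_eq_mul]
  ring

lemma tensorOp_proj (e : ∀ i, Fin (n i) → ℂ) :
    tensorOp n (fun i => proj (e i)) = proj (tensorVec n e) := by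
  ext x y
  simp only [tensorOp, of_apply, proj, vecMulVec_apply, Pi.star_apply, tensorVec,
    Complex.star_def, map_prod]
  rw [Finset.prod_mul_distrib]

set_option maxHeartbeats 1000000 in
lemma tensorOp_mulVec (M : ∀ i, Matrix (Fin (n i)) (Fin (n i)) ℂ) (f : ∀ i, Fin (n i) → ℂ) :
    (tensorOp n M).mulVec (tensorVec n f) = tensorVec n (fun i => (M i).mulVec (f i)) := by
  funext x
  simp only [tensorOp, tensorVec, mulVec, dotProduct, of_apply]
  calc (∑ y : ∀ i, Fin (n i), (∏ i, M i (x i) (y i)) * ∏ i, f i (y i))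
      = ∑ y : ∀ i, Fin (n i), ∏ i, (M i (x i) (y i) * f i (y i)) := by
        exact Finset.sum_congr rfl fun y _ => (Finset.prod_mul_distrib).symm
    _ = ∏ i, ∑ c, M i (x i) c * f i c := (Fintype.prod_sum (fun i c => M i (x i) c * f i c)).symm

lemma tensorOp_conjTranspose (M : ∀ i, Matrix (Fin (n i)) (Fin (n i)) ℂ) :
    (tensorOp n M)ᴴ = tensorOp n (fun i => (M i)ᴴ) := by
  ext x y
  simp [tensorOp, conjTranspose_apply, map_prod]

lemma update_one_mulVec (i : Fin k) (h : Matrix (Fin (n i)) (Fin (n i)) ℂ)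
    (f : ∀ i, Fin (n i) → ℂ) :
    (fun j => ((Function.update (fun j => (1 : Matrix (Fin (n j)) (Fin (n j)) ℂ)) i h) j).mulVec (f j))
      = Function.update f i (h.mulVec (f i)) := by
  funext j
  by_cases hj : j = i
  · subst hj; simp
  · simp [Function.update_of_ne hj]

lemma vecMulVec_mulVec {m : Type*} [Fintype m] (p q z : m → ℂ) :
    (vecMulVec p q).mulVec z = (q ⬝ᵥ z) • p := by
  funext x
  simp only [vecMulVec_apply, mulVec, dotProduct, Pi.smul_apply, smul_eq_mul, Finset.sum_mul]
  exact Finset.sum_congr rfl fun y _ => by ring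

lemma tinner_sum_right {m : Type*} [Fintype m] (a : Matrix m m ℂ) {ι : Type*} (s : Finset ι)
    (f : ι → Matrix m m ℂ) :
    tinner a (∑ j ∈ s, f j) = ∑ j ∈ s, tinner a (f j) := by
  simp [tinner, Matrix.mul_sum, trace_sum, Complex.re_sum]

lemma tinner_smul_real {m : Type*} [Fintype m] (a : Matrix m m ℂ) (c : ℝ) (M : Matrix m m ℂ) :
    tinner a ((c : ℂ) • M) = c * tinner a M := by
  simp [tinner, Matrix.mul_smul, trace_smul, Complex.real_smul, Complex.re_ofReal_mul]

end Tensor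
section BForm
variable {k : ℕ} {n : Fin k → ℕ}

/-- one-slot sesquilinear form induced by `a`, the other slots being frozen at `e`. -/
noncomputable def Bf {k : ℕ} (n : Fin k → ℕ) (a : Op n) (e : ∀ i, Fin (n i) → ℂ) (i : Fin k)
    (z w : Fin (n i) → ℂ) : ℂ :=
  star (tensorVec n (Function.update e i z)) ⬝ᵥ a.mulVec (tensorVec n (Function.update e i w))

lemma Bf_conj {a : Op n} (ha : a.IsHermitian) (e : ∀ i, Fin (n i) → ℂ) (i : Fin k)
    (z w : Fin (n i) → ℂ) :
    (starRingEnd ℂ) (Bf n a e i z w) = Bf n a e i w z :=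
  conj_dot_mulVec ha _ _

lemma Bf_add_right (a : Op n) (e : ∀ i, Fin (n i) → ℂ) (i : Fin k) (z w w' : Fin (n i) → ℂ) :
    Bf n a e i z (w + w') = Bf n a e i z w + Bf n a e i z w' := by
  simp [Bf, tensorVec_update_add, mulVec_add, dotProduct_add]

lemma Bf_smul_right (a : Op n) (e : ∀ i, Fin (n i) → ℂ) (i : Fin k) (c : ℂ)
    (z w : Fin (n i) → ℂ) :
    Bf n a e i z (c • w) = c * Bf n a e i z w := by
  simp [Bf, tensorVec_update_smul, mulVec_smul, dotProduct_smul, smul_eq_mul]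

lemma Bf_add_left (a : Op n) (e : ∀ i, Fin (n i) → ℂ) (i : Fin k) (z z' w : Fin (n i) → ℂ) :
    Bf n a e i (z + z') w = Bf n a e i z w + Bf n a e i z' w := by
  simp [Bf, tensorVec_update_add, star_add, add_dotProduct]

lemma Bf_smul_left (a : Op n) (e : ∀ i, Fin (n i) → ℂ) (i : Fin k) (c : ℂ)
    (z w : Fin (n i) → ℂ) :
    Bf n a e i (c • z) w = (starRingEnd ℂ) c * Bf n a e i z w := by
  simp [Bf, tensorVec_update_smul, star_smul, smul_dotProduct, smul_eq_mul, Complex.star_def]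

lemma Bf_self (a : Op n) (e : ∀ i, Fin (n i) → ℂ) (i : Fin k) :
    Bf n a e i (e i) (e i) = star (tensorVec n e) ⬝ᵥ a.mulVec (tensorVec n e) := by
  simp [Bf, Function.update_eq_self]

lemma herm_shift {m : Type*} [Fintype m] {T : Matrix m m ℂ} (hT : T.IsHermitian) (g w : m → ℂ) :
    star g ⬝ᵥ T.mulVec w = star (T.mulVec g) ⬝ᵥ w := by
  rw [dotProduct_mulVec, star_mulVec, hT]

lemma update_one_herm (i : Fin k) {h : Matrix (Fin (n i)) (Fin (n i)) ℂ} (hh : h.IsHermitian) :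
    (tensorOp n (Function.update (fun j => (1 : Matrix (Fin (n j)) (Fin (n j)) ℂ)) i h)).IsHermitian := by
  have hfun : (fun j => ((Function.update (fun j => (1 : Matrix (Fin (n j)) (Fin (n j)) ℂ)) i h) j)ᴴ)
      = Function.update (fun j => (1 : Matrix (Fin (n j)) (Fin (n j)) ℂ)) i h := by
    funext j
    by_cases hj : j = i
    · subst hj; simp [hh.eq]
    · simp [Function.update_of_ne hj]
  rw [IsHermitian, tensorOp_conjTranspose, hfun]

lemma tinner_tangent {a : Op n} (ha : a.IsHermitian) (e : ∀ i, Fin (n i) → ℂ) (i : Fin k)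
    {h : Matrix (Fin (n i)) (Fin (n i)) ℂ} (hh : h.IsHermitian) :
    tinner (Complex.I • (proj (tensorVec n e) * tensorOp n (Function.update (fun j => 1) i h)
        - tensorOp n (Function.update (fun j => 1) i h) * proj (tensorVec n e))) a
      = -2 * (Bf n a e i (h.mulVec (e i)) (e i)).im := by
  set g := tensorVec n e with hg
  set T := tensorOp n (Function.update (fun j => (1 : Matrix (Fin (n j)) (Fin (n j)) ℂ)) i h)
    with hTdef
  have hTh : T.IsHermitian := update_one_herm i hh
  have hPh : (proj g).IsHermitian := proj_isHermitian g
  have hTg : T.mulVec g = tensorVec n (Function.update e i (h.mulVec (e i))) := by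
    rw [hTdef, hg, tensorOp_mulVec, update_one_mulVec]
  have e1 : (Complex.I • (proj g * T - T * proj g))ᴴ = Complex.I • (proj g * T - T * proj g) := by
    rw [conjTranspose_smul, conjTranspose_sub, conjTranspose_mul, conjTranspose_mul,
      hTh.eq, hPh.eq]
    simp only [Complex.star_def, Complex.conj_I, neg_smul, smul_sub, neg_sub]
    abel
  have tPTa : (proj g * (T * a)).trace = Bf n a e i (h.mulVec (e i)) (e i) := by
    rw [trace_proj_mul, ← mulVec_mulVec, herm_shift hTh, hTg, Bf]
    rw [Function.update_eq_self]
  have tTPa : (T * (proj g * a)).trace = Bf n a e i (e i) (h.mulVec (e i)) := by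
    rw [← Matrix.mul_assoc, ← trace_mul_cycle, Matrix.mul_assoc, trace_proj_mul,
      ← mulVec_mulVec, hTg, Bf, Function.update_eq_self]
  have expand : tinner (Complex.I • (proj g * T - T * proj g)) a
      = (Complex.I * (Bf n a e i (h.mulVec (e i)) (e i)
          - Bf n a e i (e i) (h.mulVec (e i)))).re := by
    rw [tinner, e1, Matrix.smul_mul, trace_smul, Matrix.sub_mul, trace_sub,
      Matrix.mul_assoc, Matrix.mul_assoc, tPTa, tTPa]
    rfl
  rw [expand, ← Bf_conj ha e i (h.mulVec (e i)) (e i)]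
  set β := Bf n a e i (h.mulVec (e i)) (e i)
  simp [Complex.mul_re]
  ring

end BForm
section Defs
variable {k : ℕ} {n : Fin k → ℕ}
end Defs

section Sep
variable {k : ℕ} {n : Fin k → ℕ}

lemma tinner_add_left {m : Type*} [Fintype m] (x y a : Matrix m m ℂ) :
    tinner (x + y) a = tinner x a + tinner y a := by
  simp [tinner, conjTranspose_add, Matrix.add_mul, trace_add]

lemma tinner_smul_left_real {m : Type*} [Fintype m] (r : ℝ) (x a : Matrix m m ℂ) :
    tinner (r • x) a = r * tinner x a := by
  simp [tinner, conjTranspose_smul, Matrix.smul_mul, trace_smul, Complex.real_smul,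
    Complex.re_ofReal_mul]

lemma tinner_pure {a : Op n} (ha : a.IsHermitian) (e : ∀ i, Fin (n i) → ℂ) :
    tinner a (tensorOp n fun i => proj (e i))
      = (star (tensorVec n e) ⬝ᵥ a.mulVec (tensorVec n e)).re := by
  rw [tensorOp_proj, tinner_proj ha]

lemma pureProduct_isSeparable {p : Op n} (hp : IsPureProduct n p) : IsSeparable n p := by
  obtain ⟨e, he, rfl⟩ := hp
  refine ⟨1, fun _ => 1, fun _ => fun i => proj (e i), fun _ => zero_le_one, by simp,
    fun _ i => ⟨proj_posSemidef _, by rw [proj_trace, he i]⟩, by simp⟩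

lemma state_decomp {d : ℕ} {ρ : Matrix (Fin d) (Fin d) ℂ} (hρ : ρ.PosSemidef) :
    ∃ (lam : Fin d → ℝ) (v : Fin d → Fin d → ℂ), (∀ c, 0 ≤ lam c) ∧
      (∀ c, star (v c) ⬝ᵥ v c = 1) ∧ ρ = ∑ c, (lam c : ℂ) • proj (v c) := by
  have hH : ρ.IsHermitian := hρ.1
  set U : Matrix (Fin d) (Fin d) ℂ := (hH.eigenvectorUnitary : Matrix (Fin d) (Fin d) ℂ) with hUdef
  have hU : Uᴴ * U = 1 := by
    have h2 := (Matrix.mem_unitaryGroup_iff').mp (hH.eigenvectorUnitary).2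
    simpa [star_eq_conjTranspose] using h2
  refine ⟨hH.eigenvalues, fun c x => U x c, hρ.eigenvalues_nonneg, ?_, ?_⟩
  · intro c
    have h1 : (Uᴴ * U) c c = 1 := by rw [hU]; simp
    rw [← h1]
    simp [mul_apply, dotProduct, conjTranspose_apply]
  · conv_lhs => rw [hH.spectral_theorem, Unitary.conjStarAlgAut_apply]
    ext x y
    simp only [mul_apply, Matrix.sum_apply, Matrix.smul_apply, proj, vecMulVec_apply,
      Pi.star_apply, diagonal_apply, star_eq_conjTranspose, conjTranspose_apply,
      Function.comp_apply, smul_eq_mul, mul_ite, mul_zero, mul_one, ite_mul, zero_mul,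
      Finset.sum_ite_eq, Finset.sum_ite_eq', Finset.mem_univ, if_true]
    refine Finset.sum_congr rfl fun c _ => ?_
    rw [mul_right_comm]
    have hc : (RCLike.ofReal (hH.eigenvalues c) : ℂ) = ((hH.eigenvalues c : ℝ) : ℂ) := rfl
    rw [hc, hUdef]
    ring

lemma tensorOp_decomp (lam : ∀ i, Fin (n i) → ℝ) (v : ∀ i, Fin (n i) → Fin (n i) → ℂ) :
    tensorOp n (fun i => ∑ c, (lam i c : ℂ) • proj (v i c))
      = ∑ m : ∀ i, Fin (n i),
          (((∏ i, lam i (m i) : ℝ)) : ℂ) • tensorOp n (fun i => proj (v i (m i))) := by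
  ext x y
  simp only [tensorOp, of_apply, Matrix.sum_apply, Matrix.smul_apply, smul_eq_mul]
  rw [Fintype.prod_sum (fun i c => (lam i c : ℂ) * proj (v i c) (x i) (y i))]
  refine Finset.sum_congr rfl fun m _ => ?_
  rw [Finset.prod_mul_distrib]
  push_cast
  ring

lemma tinner_tensorOp_decomp {ρ : ∀ i, Matrix (Fin (n i)) (Fin (n i)) ℂ}
    (hρ : ∀ i, (ρ i).PosSemidef) (a : Op n) :
    ∃ (w : (∀ i, Fin (n i)) → ℝ) (E : (∀ i, Fin (n i)) → ∀ i, Fin (n i) → ℂ),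
      (∀ m, 0 ≤ w m) ∧ (∀ m i, star (E m i) ⬝ᵥ E m i = 1) ∧
      tinner a (tensorOp n ρ) = ∑ m, w m * tinner a (tensorOp n (fun i => proj (E m i))) := by
  choose lam v hlam hv hρeq using fun i => state_decomp (hρ i)
  refine ⟨fun m => ∏ i, lam i (m i), fun m i => v i (m i),
    fun m => Finset.prod_nonneg (fun i _ => hlam i _), fun m i => hv i _, ?_⟩
  conv_lhs => rw [show ρ = fun i => ∑ c, (lam i c : ℂ) • proj (v i c) from funext hρeq]
  rw [tensorOp_decomp, tinner_sum_right]
  exact Finset.sum_congr rfl fun m _ => tinner_smul_real a _ _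

lemma sep_nonneg_of_pure_nonneg {a : Op n}
    (hpure : ∀ e : ∀ i, Fin (n i) → ℂ, (∀ i, star (e i) ⬝ᵥ e i = 1) →
      0 ≤ tinner a (tensorOp n fun i => proj (e i))) :
    ∀ ϱ, IsSeparable n ϱ → 0 ≤ tinner a ϱ := by
  rintro ϱ ⟨N, w, ρ, hw, -, hstate, rfl⟩
  rw [tinner_sum_right]
  refine Finset.sum_nonneg fun j _ => ?_
  rw [tinner_smul_real]
  refine mul_nonneg (hw j) ?_
  obtain ⟨w', E, hw', hE, heq⟩ := tinner_tensorOp_decomp (fun i => (hstate j i).1) a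
  rw [heq]
  exact Finset.sum_nonneg fun m _ => mul_nonneg (hw' m) (hpure (E m) (hE m))

end Sep

section Necessity
variable {k : ℕ} {n : Fin k → ℕ}

lemma conj_dot {m : Type*} [Fintype m] (u v : m → ℂ) :
    (starRingEnd ℂ) (star u ⬝ᵥ v) = star v ⬝ᵥ u := by
  simp only [dotProduct, Pi.star_apply, map_sum, _root_.map_mul, Complex.star_def,
    Complex.conj_conj]
  exact Finset.sum_congr rfl fun x _ => by ring

lemma dot_self_re {m : Type*} [Fintype m] (x : m → ℂ) :
    star x ⬝ᵥ x = (((star x ⬝ᵥ x).re : ℝ) : ℂ) := by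
  rw [dot_self_eq]
  simp

lemma unit_normalize {m : Type*} [Fintype m] {x : m → ℂ} (hx : 0 < (star x ⬝ᵥ x).re) :
    star (((((Real.sqrt ((star x ⬝ᵥ x).re))⁻¹ : ℝ) : ℂ)) • x) ⬝ᵥ
      ((((Real.sqrt ((star x ⬝ᵥ x).re))⁻¹ : ℝ) : ℂ)) • x = 1 := by
  set ν := (star x ⬝ᵥ x).re with hν
  rw [star_smul, smul_dotProduct, dotProduct_smul, dot_self_re x, ← hν]
  simp only [star_trivial, Complex.star_def, Complex.conj_ofReal, smul_eq_mul]
  rw [← Complex.ofReal_mul, ← Complex.ofReal_mul]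
  norm_cast
  have h1 : Real.sqrt ν * Real.sqrt ν = ν := Real.mul_self_sqrt hx.le
  have h2 : Real.sqrt ν ≠ 0 := by positivity
  field_simp
  rw [Real.sq_sqrt hx.le]

lemma linear_coeff_zero {a1 a2 : ℝ} (h : ∀ s : ℝ, 0 ≤ a1 * s + a2 * s ^ 2) : a1 = 0 := by
  by_contra h1
  have hD : (0:ℝ) < |a2| + 1 := by positivity
  have hs := h (-a1 / (|a2| + 1))
  have h2 : a2 ≤ |a2| := le_abs_self a2
  have h3 : 0 < a1 ^ 2 := by positivity
  have key : a1 * (-a1 / (|a2| + 1)) + a2 * (-a1 / (|a2| + 1)) ^ 2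
      = (a1 ^ 2 / (|a2| + 1) ^ 2) * (a2 - (|a2| + 1)) := by field_simp; ring
  rw [key] at hs
  nlinarith [div_pos h3 (by positivity : (0:ℝ) < (|a2|+1)^2)]

lemma bf_im_zero {a : Op n} (ha : a.IsHermitian)
    (hpure : ∀ f : ∀ i, Fin (n i) → ℂ, (∀ j, star (f j) ⬝ᵥ f j = 1) →
      0 ≤ tinner a (tensorOp n fun j => proj (f j)))
    {e : ∀ i, Fin (n i) → ℂ} (he : ∀ j, star (e j) ⬝ᵥ e j = 1)
    (hz : tinner a (tensorOp n fun j => proj (e j)) = 0)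
    (i : Fin k) {w : Fin (n i) → ℂ}
    (hreal : (starRingEnd ℂ) (star (e i) ⬝ᵥ w) = star (e i) ⬝ᵥ w) :
    (Bf n a e i w (e i)).im = 0 := by
  have hz' : (star (tensorVec n e) ⬝ᵥ a.mulVec (tensorVec n e)).re = 0 := by
    rw [tinner_pure ha e] at hz; exact hz
  have hz0 : (Bf n a e i (e i) (e i)).re = 0 := by rw [Bf_self]; exact hz'
  set z := e i with hzdef
  have him : (star z ⬝ᵥ w).im = 0 := by
    have h2 := congrArg Complex.im hreal
    simp only [Complex.conj_im] at h2
    linarith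
  set cw := (star w ⬝ᵥ w).re with hcw
  have hcw0 : 0 ≤ cw := dot_self_re_nonneg w
  set zz : ℝ → (Fin (n i) → ℂ) := fun s => z + (((s:ℝ):ℂ) * Complex.I) • w with hzz
  have hν : ∀ s : ℝ, star (zz s) ⬝ᵥ zz s = (((1 + s^2 * cw : ℝ)) : ℂ) := by
    intro s
    simp only [hzz]
    simp only [star_add, star_smul, add_dotProduct, dotProduct_add, smul_dotProduct,
      dotProduct_smul, smul_eq_mul, star_mul', Complex.star_def, Complex.conj_ofReal,
      Complex.conj_I]
    rw [he i]
    have hwz : star w ⬝ᵥ z = (starRingEnd ℂ) (star z ⬝ᵥ w) := (conj_dot z w).symm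
    rw [hwz, dot_self_re w, ← hcw]
    rw [Complex.ext_iff]
    constructor <;>
      simp only [Complex.add_re, Complex.add_im, Complex.mul_re, Complex.mul_im,
        Complex.neg_re, Complex.neg_im, Complex.I_re, Complex.I_im, Complex.ofReal_re,
        Complex.ofReal_im, Complex.conj_re, Complex.conj_im, Complex.one_re, Complex.one_im,
        him] <;> ring
  have hνpos : ∀ s : ℝ, 0 < (star (zz s) ⬝ᵥ zz s).re := by
    intro s
    rw [hν s]
    simp only [Complex.ofReal_re]
    nlinarith [sq_nonneg s]
  set β := Bf n a e i w z with hβ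
  have hN : ∀ s : ℝ, (Bf n a e i (zz s) (zz s)).re
      = (2 * β.im) * s + (Bf n a e i w w).re * s ^ 2 := by
    intro s
    simp only [hzz]
    rw [Bf_add_left, Bf_add_right, Bf_add_right, Bf_smul_left, Bf_smul_right, Bf_smul_left,
      Bf_smul_right, ← hβ, ← Bf_conj ha e i w z, ← hβ]
    simp only [_root_.map_mul, Complex.conj_I, Complex.conj_ofReal]
    simp only [Complex.add_re, Complex.mul_re, Complex.mul_im, Complex.I_re, Complex.I_im,
      Complex.ofReal_re, Complex.ofReal_im, Complex.neg_re, Complex.neg_im,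
      Complex.conj_re, Complex.conj_im, Complex.add_im, hz0]
    ring
  have hNnn : ∀ s : ℝ, 0 ≤ (2 * β.im) * s + (Bf n a e i w w).re * s ^ 2 := by
    intro s
    rw [← hN s]
    set r := (Real.sqrt ((star (zz s) ⬝ᵥ zz s).re))⁻¹ with hr
    have hrpos : 0 < r := by
      rw [hr]
      have := hνpos s
      positivity
    have hunit := unit_normalize (hνpos s)
    set ζ := (((r:ℝ):ℂ)) • zz s with hζ
    have hf : ∀ j, star (Function.update e i ζ j) ⬝ᵥ Function.update e i ζ j = 1 := by
      intro j
      by_cases hj : j = i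
      · subst hj; rw [Function.update_self]; exact hunit
      · rw [Function.update_of_ne hj]; exact he j
    have h0 := hpure (Function.update e i ζ) hf
    rw [tinner_pure ha] at h0
    have hBζ : (Bf n a e i ζ ζ) = ((r * r : ℝ) : ℂ) * Bf n a e i (zz s) (zz s) := by
      rw [hζ, Bf_smul_left, Bf_smul_right, Complex.conj_ofReal, Complex.ofReal_mul]
      ring
    have hBfdef : Bf n a e i ζ ζ = star (tensorVec n (Function.update e i ζ)) ⬝ᵥ
        a.mulVec (tensorVec n (Function.update e i ζ)) := rfl
    rw [← hBfdef, hBζ] at h0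
    have h0' : 0 ≤ r * r * (Bf n a e i (zz s) (zz s)).re := by
      simpa [Complex.re_ofReal_mul] using h0
    nlinarith [h0', mul_pos hrpos hrpos]
  have := linear_coeff_zero (a1 := 2 * β.im) (a2 := (Bf n a e i w w).re)
    (by intro s; simpa [mul_comm] using hNnn s)
  linarith

end Necessity

section Necessity2
variable {k : ℕ} {n : Fin k → ℕ}

lemma starCond_of_nonneg {a : Op n} (ha : a.IsHermitian)
    (hsep : ∀ ϱ, IsSeparable n ϱ → 0 ≤ tinner a ϱ) : StarCond n a := by
  have hpure : ∀ f : ∀ i, Fin (n i) → ℂ, (∀ j, star (f j) ⬝ᵥ f j = 1) →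
      0 ≤ tinner a (tensorOp n fun j => proj (f j)) := by
    intro f hf
    exact hsep _ (pureProduct_isSeparable ⟨f, hf, rfl⟩)
  rintro p ⟨e, he, rfl⟩ hz x ⟨t, ht, rfl⟩
  set P := tensorOp n (fun i => proj (e i)) with hP
  have key : ∀ t' ∈ tau n, tinner (Complex.I • (P * t' - t' * P)) a = 0 := by
    intro t' ht'
    induction ht' using Submodule.span_induction with
    | mem u hu =>
        obtain ⟨S, ⟨i, rfl⟩, huS⟩ := hu
        obtain ⟨h, hherm, -, rfl⟩ := huS
        have hPproj : P = proj (tensorVec n e) := tensorOp_proj e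
        rw [hPproj, tinner_tangent ha e i hherm]
        have him := bf_im_zero ha hpure he hz i
          (w := h.mulVec (e i)) (conj_dot_mulVec hherm (e i) (e i))
        rw [him]
        ring
    | zero => simp [tinner]
    | add u v hu hv hiu hiv =>
        have hsplit : P * (u + v) - (u + v) * P = (P * u - u * P) + (P * v - v * P) := by
          rw [mul_add, add_mul]; abel
        rw [hsplit, smul_add, tinner_add_left, hiu, hiv, add_zero]
    | smul r u hu hiu =>
        have hsplit : P * (r • u) - (r • u) * P = r • (P * u - u * P) := by
          rw [Matrix.mul_smul, Matrix.smul_mul, smul_sub]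
        rw [hsplit, smul_comm, tinner_smul_left_real, hiu, mul_zero]
  exact key t ht

lemma exists_pure_pos {a : Op n}
    (hsep : ∀ ϱ, IsSeparable n ϱ → 0 ≤ tinner a ϱ)
    (hnz : ¬ ∀ ϱ, IsSeparable n ϱ → tinner a ϱ = 0) :
    ∃ p, IsPureProduct n p ∧ 0 < tinner a p := by
  push_neg at hnz
  obtain ⟨ϱ, hϱ, hne⟩ := hnz
  have hpos : 0 < tinner a ϱ := lt_of_le_of_ne (hsep ϱ hϱ) (Ne.symm hne)
  obtain ⟨N, w, ρ, hw, -, hstate, rfl⟩ := hϱ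
  rw [tinner_sum_right] at hpos
  have hex : ∃ j, 0 < tinner a ((w j : ℂ) • tensorOp n (ρ j)) := by
    by_contra hc
    push_neg at hc
    exact absurd (Finset.sum_nonpos fun j _ => hc j) (not_le.mpr hpos)
  obtain ⟨j, hj⟩ := hex
  rw [tinner_smul_real] at hj
  have hj2 : 0 < tinner a (tensorOp n (ρ j)) := by nlinarith [hw j]
  obtain ⟨w', E, hw', hE, heq⟩ := tinner_tensorOp_decomp (fun i => (hstate j i).1) a
  rw [heq] at hj2
  have hex2 : ∃ m, 0 < w' m * tinner a (tensorOp n fun i => proj (E m i)) := by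
    by_contra hc
    push_neg at hc
    exact absurd (Finset.sum_nonpos fun m _ => hc m) (not_le.mpr hj2)
  obtain ⟨m, hm⟩ := hex2
  exact ⟨_, ⟨E m, hE m, rfl⟩, by nlinarith [hw' m]⟩

end Necessity2

section SufHelp
variable {k : ℕ} {n : Fin k → ℕ}

lemma dot_self_pos {m : Type*} [Fintype m] {x : m → ℂ} (hx : x ≠ 0) :
    0 < (star x ⬝ᵥ x).re := by
  rcases (dot_self_re_nonneg x).lt_or_eq with h | h
  · exact h
  · exfalso
    apply hx
    have h2 : (star x ⬝ᵥ x).re = ∑ j, Complex.normSq (x j) := by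
      rw [dot_self_eq]; simp
    rw [← h] at h2
    have h3 := (Finset.sum_eq_zero_iff_of_nonneg
      (fun j _ => Complex.normSq_nonneg (x j))).mp h2.symm
    funext j
    exact Complex.normSq_eq_zero.mp (h3 j (Finset.mem_univ j))

lemma vecMulVec_conjT {m : Type*} [Fintype m] (p q : m → ℂ) :
    (vecMulVec p (star q))ᴴ = vecMulVec q (star p) := by
  ext x y
  simp [conjTranspose_apply, vecMulVec_apply, mul_comm]

lemma trace_vecMulVec {m : Type*} [Fintype m] (p q : m → ℂ) :
    (vecMulVec p q).trace = q ⬝ᵥ p := by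
  simp [trace, diag, vecMulVec_apply, dotProduct, mul_comm]

lemma Bf_update (a : Op n) (e : ∀ i, Fin (n i) → ℂ) (i : Fin k) (z w1 w2 : Fin (n i) → ℂ) :
    Bf n a (Function.update e i z) i w1 w2 = Bf n a e i w1 w2 := by
  simp [Bf, Function.update_idem]

lemma quad_pos_exists {α c b : ℝ} (hb : 0 < b) : ∃ t : ℝ, 0 < α + 2*c*t + b*t^2 := by
  refine ⟨(1 + |α| + 2*|c|)/b + 1, ?_⟩
  set T := (1 + |α| + 2*|c|)/b + 1 with hT
  have h1 : 1 ≤ T := by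
    rw [hT]
    have : 0 ≤ (1 + |α| + 2*|c|)/b := by positivity
    linarith
  have h2 : 1 + |α| + 2*|c| ≤ b*T := by
    rw [hT, mul_add, mul_one, mul_div_cancel₀ _ (ne_of_gt hb)]
    linarith
  nlinarith [mul_nonneg (sub_nonneg.mpr h2) (by linarith : (0:ℝ) ≤ T),
    mul_nonneg (abs_nonneg α) (by linarith : (0:ℝ) ≤ T - 1),
    mul_nonneg (by linarith [neg_abs_le c] : (0:ℝ) ≤ c + |c|) (by linarith : (0:ℝ) ≤ T),
    le_abs_self α, neg_abs_le α]

lemma quad_zero_exists {α c b : ℝ} (h0 : α < 0) {t1 : ℝ} (h1 : 0 < α + 2*c*t1 + b*t1^2) :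
    ∃ t, α + 2*c*t + b*t^2 = 0 ∧ c + b*t ≠ 0 := by
  have hcont : Continuous fun t : ℝ => α + 2*c*t + b*t^2 := by continuity
  have hmem : (0:ℝ) ∈ Set.uIcc (α + 2*c*(0:ℝ) + b*(0:ℝ)^2) (α + 2*c*t1 + b*t1^2) := by
    have hf0 : α + 2*c*(0:ℝ) + b*(0:ℝ)^2 = α := by ring
    rw [hf0]
    exact Set.mem_uIcc.mpr (Or.inl ⟨h0.le, h1.le⟩)
  obtain ⟨t, -, ht⟩ := intermediate_value_uIcc (hcont.continuousOn) hmem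
  refine ⟨t, ht, fun hc => ?_⟩
  have hct : c*t + b*t^2 = 0 := by linear_combination t * hc
  have hct1 : c*t1 + b*t*t1 = 0 := by linear_combination t1 * hc
  have hα : α = b*t^2 := by linear_combination ht - 2*hct
  have hb : 0 < b := by nlinarith [sq_nonneg (t1 - t), hct1, hα, h1]
  nlinarith [mul_nonneg hb.le (sq_nonneg t)]

end SufHelp

section L1
variable {k : ℕ} {n : Fin k → ℕ}

lemma no_sign_change {a : Op n} (ha : a.IsHermitian) (hstar : StarCond n a)
    {e : ∀ i, Fin (n i) → ℂ} (he : ∀ j, star (e j) ⬝ᵥ e j = 1) (i : Fin k)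
    {w : Fin (n i) → ℂ} (hw : star w ⬝ᵥ w = 1)
    (hneg : (Bf n a e i (e i) (e i)).re < 0)
    (hpos : 0 < (Bf n a e i w w).re) : False := by
  classical
  set c0 := star (e i) ⬝ᵥ w with hc0
  set u : ℂ := if c0 = 0 then 1 else c0 / (‖c0‖ : ℂ) with hu
  have habs0 : c0 ≠ 0 → (‖c0‖ : ℝ) ≠ 0 := fun h => by
    simpa using (norm_ne_zero_iff.mpr h)
  have huu : (starRingEnd ℂ) u * u = 1 := by
    rw [hu]
    split_ifs with h
    · simp
    · rw [map_div₀, Complex.conj_ofReal, div_mul_div_comm, ← Complex.normSq_eq_conj_mul_self,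
        ← Complex.ofReal_mul]
      rw [Complex.normSq_eq_norm_sq]
      have := habs0 h
      rw [div_eq_one_iff_eq (by exact_mod_cast mul_ne_zero this this)]
      push_cast
      ring
  set x := u • e i with hx
  have hxx : star x ⬝ᵥ x = 1 := by
    rw [hx, star_smul, smul_dotProduct, dotProduct_smul, he i, smul_eq_mul, smul_eq_mul]
    simpa using huu
  have hBxx : Bf n a e i x x = Bf n a e i (e i) (e i) := by
    rw [hx, Bf_smul_left, Bf_smul_right, ← mul_assoc, huu, one_mul]
  have hxw : star x ⬝ᵥ w = ((‖c0‖ : ℝ) : ℂ) := by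
    rw [hx, star_smul, smul_dotProduct, ← hc0, smul_eq_mul, Complex.star_def, hu]
    split_ifs with h
    · simp [h]
    · rw [map_div₀, Complex.conj_ofReal, div_mul_eq_mul_div, ← Complex.normSq_eq_conj_mul_self,
        Complex.normSq_eq_norm_sq]
      have hne : ((‖c0‖ : ℝ) : ℂ) ≠ 0 := by exact_mod_cast habs0 h
      rw [div_eq_iff hne]
      push_cast
      ring
  clear_value x
  set p := ‖c0‖ with hp
  have hp0 : 0 ≤ p := norm_nonneg c0
  set d := w - (p:ℂ) • x with hd
  have hxd : star x ⬝ᵥ d = 0 := by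
    rw [hd, dotProduct_sub, dotProduct_smul, hxw, hxx, smul_eq_mul, mul_one, sub_self]
  set α := (Bf n a e i x x).re with hα
  have hαneg : α < 0 := by rw [hα, hBxx]; exact hneg
  by_cases hd0 : d = 0
  · have hwpx : w = (p:ℂ) • x := sub_eq_zero.mp hd0
    have h1 : (1:ℂ) = ((p*p : ℝ) : ℂ) := by
      rw [← hw, hwpx, star_smul, smul_dotProduct, dotProduct_smul, hxx, smul_eq_mul,
        smul_eq_mul, mul_one, Complex.star_def, Complex.conj_ofReal]
      push_cast
      ring
    have hp2 : p * p = 1 := by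
      have h2 := h1.symm
      exact_mod_cast h2
    have hBw : Bf n a e i w w = ((p*p : ℝ) : ℂ) * Bf n a e i x x := by
      rw [hwpx, Bf_smul_left, Bf_smul_right, Complex.conj_ofReal]
      push_cast
      ring
    rw [hBw, hp2] at hpos
    simp only [Complex.ofReal_one, one_mul] at hpos
    linarith
  · have hq2 : 0 < (star d ⬝ᵥ d).re := dot_self_pos hd0
    set rq := Real.sqrt ((star d ⬝ᵥ d).re) with hrq
    have hrqpos : 0 < rq := Real.sqrt_pos.mpr hq2
    set y := (((rq⁻¹ : ℝ) : ℂ)) • d with hy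
    have hyy : star y ⬝ᵥ y = 1 := unit_normalize hq2
    have hxy : star x ⬝ᵥ y = 0 := by
      rw [hy, dotProduct_smul, hxd, smul_eq_mul, mul_zero]
    have hyx : star y ⬝ᵥ x = 0 := by
      rw [← conj_dot x y, hxy, map_zero]
    have hwxy : w = (p:ℂ) • x + (rq:ℂ) • y := by
      have h7 : (rq:ℂ) • y = d := by
        rw [hy, smul_smul]
        have hone : (rq:ℂ) * ((rq⁻¹:ℝ):ℂ) = 1 := by
          push_cast
          field_simp
        rw [hone, one_smul]
      rw [h7, hd]
      abel
    clear_value y d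
    set c := (Bf n a e i x y).re with hc
    set b := (Bf n a e i y y).re with hb
    have hBxxre : Bf n a e i x x = ((α : ℝ) : ℂ) := by
      have h8 := Bf_conj ha e i x x
      rw [hα]
      exact (Complex.conj_eq_iff_re.mp h8).symm
    have hByyre : Bf n a e i y y = ((b : ℝ) : ℂ) := by
      have h8 := Bf_conj ha e i y y
      rw [hb]
      exact (Complex.conj_eq_iff_re.mp h8).symm
    have hquad : ∀ t0 t1 : ℝ, (Bf n a e i (((t0:ℝ):ℂ) • x + ((t1:ℝ):ℂ) • y)
        (((t0:ℝ):ℂ) • x + ((t1:ℝ):ℂ) • y)).re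
        = α * t0^2 + 2*c*(t0*t1) + b*t1^2 := by
      intro t0 t1
      simp only [Bf_add_left, Bf_add_right, Bf_smul_left, Bf_smul_right]
      rw [← Bf_conj ha e i x y]
      simp only [Complex.conj_ofReal, Complex.add_re, Complex.mul_re, Complex.ofReal_re,
        Complex.ofReal_im, Complex.conj_re, Complex.conj_im, Complex.add_im, Complex.mul_im,
        hBxxre, hByyre]
      ring
    have hwval : (Bf n a e i w w).re = α*p^2 + 2*c*(p*rq) + b*rq^2 := by
      rw [hwxy, hquad p rq]
    have hQt1 : ∃ t1 : ℝ, 0 < α + 2*c*t1 + b*t1^2 := by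
      rcases eq_or_lt_of_le hp0 with hpz | hpz
      · have hb0 : 0 < b := by
          have h5 := hpos
          rw [hwval, ← hpz] at h5
          have hrq2 : 0 < rq^2 := by positivity
          nlinarith [h5, hrq2]
        exact quad_pos_exists hb0
      · refine ⟨rq/p, ?_⟩
        have hval' : 0 < α*p^2 + 2*c*(p*rq) + b*rq^2 := by rw [← hwval]; exact hpos
        have heq : α + 2*c*(rq/p) + b*(rq/p)^2 = (α*p^2 + 2*c*(p*rq) + b*rq^2)/p^2 := by
          field_simp
        rw [heq]
        exact div_pos hval' (by positivity)
    obtain ⟨t1, ht1⟩ := hQt1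
    obtain ⟨t, htz, htd⟩ := quad_zero_exists hαneg ht1
    set ξ := x + ((t:ℝ):ℂ) • y with hξ
    have hξξ : star ξ ⬝ᵥ ξ = ((1 + t^2 : ℝ) : ℂ) := by
      rw [hξ]
      simp only [star_add, star_smul, add_dotProduct, dotProduct_add, smul_dotProduct,
        dotProduct_smul, smul_eq_mul, Pi.star_apply, Complex.star_def, Complex.conj_ofReal]
      rw [hxx, hxy, hyx, hyy]
      push_cast
      ring
    have hξpos : 0 < (star ξ ⬝ᵥ ξ).re := by
      rw [hξξ]
      simp only [Complex.ofReal_re]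
      nlinarith [sq_nonneg t]
    set rz := (Real.sqrt ((star ξ ⬝ᵥ ξ).re))⁻¹ with hrz
    have hrzpos : 0 < rz := by
      rw [hrz]
      have := hξpos
      positivity
    set z := ((rz:ℝ):ℂ) • ξ with hz
    have hzz : star z ⬝ᵥ z = 1 := unit_normalize hξpos
    have hBz : Bf n a e i z z = ((rz*rz : ℝ):ℂ) * Bf n a e i ξ ξ := by
      rw [hz, Bf_smul_left, Bf_smul_right, Complex.conj_ofReal, Complex.ofReal_mul]
      ring
    have hBξ : (Bf n a e i ξ ξ).re = α + 2*c*t + b*t^2 := by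
      have h6 := hquad 1 t
      simp only [Complex.ofReal_one, one_smul] at h6
      rw [hξ, h6]
      ring
    set v := y - ((t:ℝ):ℂ) • x with hv
    have hξv : star ξ ⬝ᵥ v = 0 := by
      rw [hξ, hv]
      simp only [star_add, star_smul, add_dotProduct, dotProduct_sub, dotProduct_smul,
        smul_dotProduct, smul_eq_mul, Pi.star_apply, Complex.star_def, Complex.conj_ofReal]
      rw [hxx, hxy, hyx, hyy]
      ring
    have hzv : star z ⬝ᵥ v = 0 := by
      rw [hz, star_smul, smul_dotProduct, hξv, smul_eq_mul, mul_zero]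
    have hvz : star v ⬝ᵥ z = 0 := by
      rw [← conj_dot z v, hzv, map_zero]
    have hBvz : (Bf n a e i v z).re = rz * (c + t*b - t*α - t^2*c) := by
      rw [hv, hz, hξ]
      rw [sub_eq_add_neg, ← neg_smul,
        show -(((t:ℝ):ℂ)) = (((-t : ℝ)):ℂ) by push_cast; ring]
      simp only [Bf_add_left, Bf_add_right, Bf_smul_left, Bf_smul_right]
      rw [← Bf_conj ha e i x y]
      simp only [Complex.conj_ofReal, Complex.add_re, Complex.mul_re, Complex.ofReal_re,
        Complex.ofReal_im, Complex.conj_re, Complex.conj_im, Complex.add_im, Complex.mul_im,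
        hBxxre, hByyre]
      ring
    clear_value ξ
    set f := Function.update e i z with hf
    have hfunit : ∀ j, star (f j) ⬝ᵥ f j = 1 := by
      intro j
      by_cases hj : j = i
      · subst hj; rw [hf, Function.update_self]; exact hzz
      · rw [hf, Function.update_of_ne hj]; exact he j
    set q := tensorOp n (fun j => proj (f j)) with hq
    have hqpure : IsPureProduct n q := ⟨f, hfunit, hq⟩
    have htq : tinner a q = 0 := by
      rw [hq, tinner_pure ha]
      have hBfdef : Bf n a e i z z = star (tensorVec n f) ⬝ᵥ a.mulVec (tensorVec n f) := rfl
      rw [← hBfdef, hBz, Complex.re_ofReal_mul, hBξ, htz, mul_zero]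
    set vv := -(Complex.I) • v with hvv
    have hzvv : star z ⬝ᵥ vv = 0 := by
      rw [hvv, dotProduct_smul, hzv, smul_eq_mul, mul_zero]
    have hvvz : star vv ⬝ᵥ z = 0 := by
      rw [hvv, star_smul, smul_dotProduct, hvz, smul_eq_mul, mul_zero]
    set h := vecMulVec vv (star z) + vecMulVec z (star vv) with hh
    have hherm : h.IsHermitian := by
      rw [IsHermitian, hh, conjTranspose_add, vecMulVec_conjT, vecMulVec_conjT, add_comm]
    have htr : h.trace = 0 := by
      rw [hh, trace_add, trace_vecMulVec, trace_vecMulVec, hzvv, hvvz, add_zero]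
    have hhz : h.mulVec z = vv := by
      rw [hh, add_mulVec, vecMulVec_mulVec, vecMulVec_mulVec, hzz, hvvz, one_smul, zero_smul,
        add_zero]
    set T := tensorOp n (Function.update (fun j => (1 : Matrix (Fin (n j)) (Fin (n j)) ℂ)) i h)
      with hT
    have hTmem : T ∈ tau n :=
      Submodule.subset_span (Set.mem_iUnion.mpr ⟨i, ⟨h, hherm, htr, hT⟩⟩)
    have hqproj : q = proj (tensorVec n f) := by rw [hq]; exact tensorOp_proj f
    have hmem : Complex.I • (q * T - T * q) ∈ sepTangent n q := ⟨T, hTmem, rfl⟩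
    have hzero : tinner (Complex.I • (q * T - T * q)) a = 0 := hstar q hqpure htq hmem
    have hfi : f i = z := by rw [hf, Function.update_self]
    have hval : tinner (Complex.I • (q * T - T * q)) a
        = -2 * (Bf n a e i vv z).im := by
      rw [hqproj, hT, tinner_tangent ha f i hherm, hfi, hhz, hf, Bf_update]
    rw [hval] at hzero
    have him : (Bf n a e i vv z).im = (Bf n a e i v z).re := by
      rw [hvv, Bf_smul_left]
      simp [map_neg, Complex.conj_I, Complex.mul_im, Complex.I_re, Complex.I_im]
    rw [him, hBvz] at hzero
    have hfinal : c + t*b - t*α - t^2*c = (1+t^2)*(c + b*t) := by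
      linear_combination (-t) * htz
    rw [hfinal] at hzero
    have h1t : (0:ℝ) < 1 + t^2 := by positivity
    rcases mul_eq_zero.mp hzero with h9 | h9
    · norm_num at h9
    · rcases mul_eq_zero.mp h9 with h9 | h9
      · exact absurd h9 (ne_of_gt hrzpos)
      · rcases mul_eq_zero.mp h9 with h9 | h9
        · linarith
        · exact htd h9

end L1

section L2
variable {k : ℕ} {n : Fin k → ℕ}

lemma quad_pos_near_zero {A B C : ℝ} (hA : 0 < A) :
    ∃ t : ℝ, 0 < t ∧ ∀ s : ℝ, |s| ≤ t → 0 < A + B*s + C*s^2 := by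
  refine ⟨min 1 (A/(|B|+|C|+1)), by positivity, fun s hs => ?_⟩
  have h1 : |s| ≤ 1 := le_trans hs (min_le_left _ _)
  have h2 : |s| ≤ A/(|B|+|C|+1) := le_trans hs (min_le_right _ _)
  have h3 : |s| * (|B| + |C| + 1) ≤ A := by
    rw [← le_div_iff₀ (by positivity : (0:ℝ) < |B|+|C|+1)]
    exact h2
  rcases (abs_nonneg s).eq_or_lt with h0 | h0
  · have hs0 : s = 0 := abs_eq_zero.mp h0.symm
    simpa [hs0] using hA
  · have hb : -(|B| * |s|) ≤ B*s := by
      have h4 := neg_abs_le (B*s)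
      rw [abs_mul] at h4
      exact h4
    have hss : s^2 ≤ |s| := by
      have h5 := mul_le_of_le_one_right (abs_nonneg s) h1
      calc s^2 = |s| * |s| := by rw [← sq_abs]; ring
        _ ≤ |s| := h5
    have hcs : -(|C| * |s|) ≤ C*s^2 := by
      have h4 := neg_abs_le (C*s^2)
      rw [abs_mul, abs_of_nonneg (sq_nonneg s)] at h4
      nlinarith [mul_le_mul_of_nonneg_left hss (abs_nonneg C)]
    nlinarith [h3, hb, hcs, h0]

lemma tinner_update {a : Op n} (ha : a.IsHermitian) (g : ∀ j, Fin (n j) → ℂ) (i : Fin k)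
    (z : Fin (n i) → ℂ) :
    tinner a (tensorOp n fun j => proj (Function.update g i z j)) = (Bf n a g i z z).re := by
  rw [tinner_pure ha]
  rfl

lemma tinner_self_Bf {a : Op n} (ha : a.IsHermitian) (g : ∀ j, Fin (n j) → ℂ) (i : Fin k) :
    tinner a (tensorOp n fun j => proj (g j)) = (Bf n a g i (g i) (g i)).re := by
  rw [tinner_pure ha, Bf_self]

lemma dot_expand {m : Type*} [Fintype m] {z y : m → ℂ} (hz : star z ⬝ᵥ z = 1)
    (hy : star y ⬝ᵥ y = 1) (t : ℝ) :
    star (z + ((t:ℝ):ℂ) • y) ⬝ᵥ (z + ((t:ℝ):ℂ) • y)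
      = ((1 + 2*((star z ⬝ᵥ y).re)*t + t^2 : ℝ) : ℂ) := by
  simp only [star_add, star_smul, add_dotProduct, dotProduct_add, smul_dotProduct,
    dotProduct_smul, smul_eq_mul, Pi.star_apply, Complex.star_def, Complex.conj_ofReal]
  rw [hz, hy, ← conj_dot z y]
  rw [Complex.ext_iff]
  constructor <;>
    simp only [Complex.add_re, Complex.add_im, Complex.mul_re, Complex.mul_im, Complex.one_re,
      Complex.one_im, Complex.ofReal_re, Complex.ofReal_im, Complex.conj_re, Complex.conj_im] <;>
    ring

lemma Bf_expand_re {a : Op n} (ha : a.IsHermitian) (g : ∀ j, Fin (n j) → ℂ) (i : Fin k)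
    (z y : Fin (n i) → ℂ) (t : ℝ) :
    (Bf n a g i (z + ((t:ℝ):ℂ) • y) (z + ((t:ℝ):ℂ) • y)).re
      = (Bf n a g i z z).re + 2*((Bf n a g i z y).re)*t + ((Bf n a g i y y).re)*t^2 := by
  simp only [Bf_add_left, Bf_add_right, Bf_smul_left, Bf_smul_right]
  rw [← Bf_conj ha g i z y]
  simp only [Complex.conj_ofReal, Complex.add_re, Complex.mul_re, Complex.ofReal_re,
    Complex.ofReal_im, Complex.conj_re, Complex.conj_im, Complex.add_im, Complex.mul_im]
  ring

lemma Bf_scale_re (a : Op n) (g : ∀ j, Fin (n j) → ℂ) (i : Fin k)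
    (ζ : Fin (n i) → ℂ) (r : ℝ) :
    (Bf n a g i (((r:ℝ):ℂ) • ζ) (((r:ℝ):ℂ) • ζ)).re = r*r*(Bf n a g i ζ ζ).re := by
  rw [Bf_smul_left, Bf_smul_right, Complex.conj_ofReal, ← mul_assoc, ← Complex.ofReal_mul,
    Complex.re_ofReal_mul]

lemma no_mixed_signs {a : Op n} (ha : a.IsHermitian) (hstar : StarCond n a) (N : ℕ) :
    ∀ (u v : ∀ i, Fin (n i) → ℂ),
      (∀ j, star (u j) ⬝ᵥ u j = 1) → (∀ j, star (v j) ⬝ᵥ v j = 1) →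
      (Finset.univ.filter (fun j => u j ≠ v j)).card ≤ N →
      tinner a (tensorOp n fun j => proj (u j)) < 0 →
      0 < tinner a (tensorOp n fun j => proj (v j)) → False := by
  classical
  induction N with
  | zero =>
      intro u v hu hv hcard hneg hpos
      have huv : u = v := by
        funext j
        by_contra hj
        have hmem : j ∈ Finset.univ.filter (fun j => u j ≠ v j) :=
          Finset.mem_filter.mpr ⟨Finset.mem_univ j, hj⟩
        have := Finset.card_pos.mpr ⟨j, hmem⟩
        omega
      rw [huv] at hneg
      linarith
  | succ N ih =>
      intro u v hu hv hcard hneg hpos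
      by_cases hD : (Finset.univ.filter (fun j => u j ≠ v j)).card ≤ N
      · exact ih u v hu hv hD hneg hpos
      have hne : ∃ i, u i ≠ v i := by
        by_contra hc
        push_neg at hc
        rw [funext hc] at hneg
        linarith
      obtain ⟨i, hi⟩ := hne
      have himem : i ∈ Finset.univ.filter (fun j => u j ≠ v j) :=
        Finset.mem_filter.mpr ⟨Finset.mem_univ i, hi⟩
      -- generic card bound for any slot value z
      have hcard' : ∀ z : Fin (n i) → ℂ,
          (Finset.univ.filter
            (fun j => Function.update u i z j ≠ Function.update v i z j)).card ≤ N := by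
        intro z
        have hsub : Finset.univ.filter
              (fun j => Function.update u i z j ≠ Function.update v i z j)
            ⊆ (Finset.univ.filter (fun j => u j ≠ v j)).erase i := by
          intro j hj
          rw [Finset.mem_filter] at hj
          by_cases hij : j = i
          · subst hij
            simp at hj
          · rw [Function.update_of_ne hij, Function.update_of_ne hij] at hj
            exact Finset.mem_erase.mpr ⟨hij, Finset.mem_filter.mpr ⟨Finset.mem_univ j, hj.2⟩⟩
        have h5 := Finset.card_le_card hsub
        rw [Finset.card_erase_of_mem himem] at h5
        omega
      have hBuu : (Bf n a u i (u i) (u i)).re < 0 := by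
        rw [← tinner_self_Bf ha u i]
        exact hneg
      have hBvv : 0 < (Bf n a v i (v i) (v i)).re := by
        rw [← tinner_self_Bf ha v i]
        exact hpos
      -- case on the value of u-form at v i
      rcases lt_trichotomy ((Bf n a u i (v i) (v i)).re) 0 with hs | hs | hs
      · -- negative: replace slot i of u by v i and use ih
        have hneg' : tinner a (tensorOp n fun j => proj (Function.update u i (v i) j)) < 0 := by
          rw [tinner_update ha]
          exact hs
        have hu' : ∀ j, star (Function.update u i (v i) j) ⬝ᵥ Function.update u i (v i) j = 1 := by
          intro j
          by_cases hj : j = i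
          · subst hj; rw [Function.update_self]; exact hv _
          · rw [Function.update_of_ne hj]; exact hu j
        have hcard'' : (Finset.univ.filter
            (fun j => Function.update u i (v i) j ≠ v j)).card ≤ N := by
          have h6 := hcard' (v i)
          have : (Finset.univ.filter (fun j => Function.update u i (v i) j ≠ v j))
              = (Finset.univ.filter
                (fun j => Function.update u i (v i) j ≠ Function.update v i (v i) j)) := by
            rw [Function.update_eq_self]
          rw [this]
          exact h6
        exact ih (Function.update u i (v i)) v hu' hv hcard'' hneg' hpos
      · -- zero: perturb
        set zi := v i with hzi
        set y := u i with hy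
        have hdotu : star y ⬝ᵥ y = 1 := hu i
        have hdotz : star zi ⬝ᵥ zi = 1 := hv i
        set rr := (star zi ⬝ᵥ y).re with hrr
        -- positivity windows
        obtain ⟨t1, ht1pos, ht1⟩ := quad_pos_near_zero (A := 1) (B := 2*rr) (C := 1)
          (by norm_num)
        obtain ⟨t2, ht2pos, ht2⟩ := quad_pos_near_zero
          (A := (Bf n a v i zi zi).re) (B := 2*(Bf n a v i zi y).re)
          (C := (Bf n a v i y y).re) (by rw [hzi]; exact hBvv)
        set t0 := min t1 t2 with ht0
        have ht0pos : 0 < t0 := lt_min ht1pos ht2pos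
        -- choose sign: q_u(t0) < 0 or q_u(-t0) < 0
        have hsum : (Bf n a u i (zi + ((t0:ℝ):ℂ) • y) (zi + ((t0:ℝ):ℂ) • y)).re
              + (Bf n a u i (zi + ((-t0:ℝ):ℂ) • y) (zi + ((-t0:ℝ):ℂ) • y)).re
            = 2*(Bf n a u i y y).re * t0^2 := by
          rw [Bf_expand_re ha u i zi y t0, Bf_expand_re ha u i zi y (-t0), hs]
          ring
        have hyyneg : (Bf n a u i y y).re < 0 := hBuu
        have hsumneg : (Bf n a u i (zi + ((t0:ℝ):ℂ) • y) (zi + ((t0:ℝ):ℂ) • y)).re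
              + (Bf n a u i (zi + ((-t0:ℝ):ℂ) • y) (zi + ((-t0:ℝ):ℂ) • y)).re < 0 := by
          rw [hsum]
          have : 0 < t0^2 := by positivity
          nlinarith
        have hpick : ∃ s : ℝ, |s| ≤ t0 ∧
            (Bf n a u i (zi + ((s:ℝ):ℂ) • y) (zi + ((s:ℝ):ℂ) • y)).re < 0 := by
          rcases lt_or_ge ((Bf n a u i (zi + ((t0:ℝ):ℂ) • y) (zi + ((t0:ℝ):ℂ) • y)).re) 0
            with h7 | h7
          · exact ⟨t0, by rw [abs_of_pos ht0pos], h7⟩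
          · refine ⟨-t0, by rw [abs_neg, abs_of_pos ht0pos], ?_⟩
            linarith
        obtain ⟨s, hsabs, hqu⟩ := hpick
        set ξ := zi + ((s:ℝ):ℂ) • y with hξ
        have hν : star ξ ⬝ᵥ ξ = ((1 + 2*rr*s + s^2 : ℝ) : ℂ) := by
          rw [hξ]
          exact dot_expand hdotz hdotu s
        have hνpos : 0 < (star ξ ⬝ᵥ ξ).re := by
          rw [hν]
          simp only [Complex.ofReal_re]
          have := ht1 s (le_trans hsabs (min_le_left _ _))
          nlinarith [this]
        have hqv : 0 < (Bf n a v i ξ ξ).re := by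
          rw [hξ, Bf_expand_re ha v i zi y s]
          have := ht2 s (le_trans hsabs (min_le_right _ _))
          nlinarith [this]
        -- normalize
        set r := (Real.sqrt ((star ξ ⬝ᵥ ξ).re))⁻¹ with hr
        have hrpos : 0 < r := by
          rw [hr]
          have := hνpos
          positivity
        set z := ((r:ℝ):ℂ) • ξ with hzdef
        have hzunit : star z ⬝ᵥ z = 1 := unit_normalize hνpos
        have huz : (Bf n a u i z z).re < 0 := by
          rw [hzdef, Bf_scale_re]
          nlinarith [mul_pos hrpos hrpos, hqu]
        have hvzpos : 0 < (Bf n a v i z z).re := by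
          rw [hzdef, Bf_scale_re]
          nlinarith [mul_pos hrpos hrpos, hqv]
        -- apply ih with updated tuples
        have hu' : ∀ j, star (Function.update u i z j) ⬝ᵥ Function.update u i z j = 1 := by
          intro j
          by_cases hj : j = i
          · subst hj; rw [Function.update_self]; exact hzunit
          · rw [Function.update_of_ne hj]; exact hu j
        have hv' : ∀ j, star (Function.update v i z j) ⬝ᵥ Function.update v i z j = 1 := by
          intro j
          by_cases hj : j = i
          · subst hj; rw [Function.update_self]; exact hzunit
          · rw [Function.update_of_ne hj]; exact hv j
        have hneg' : tinner a (tensorOp n fun j => proj (Function.update u i z j)) < 0 := by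
          rw [tinner_update ha]
          exact huz
        have hpos' : 0 < tinner a (tensorOp n fun j => proj (Function.update v i z j)) := by
          rw [tinner_update ha]
          exact hvzpos
        exact ih (Function.update u i z) (Function.update v i z) hu' hv' (hcard' z) hneg' hpos'
      · -- positive: contradiction with no-sign-change along slot i of u
        exact no_sign_change ha hstar hu i (hv i) hBuu hs

lemma pure_nonneg_of_star {a : Op n} (ha : a.IsHermitian) (hstar : StarCond n a)
    {v : ∀ i, Fin (n i) → ℂ} (hv : ∀ j, star (v j) ⬝ᵥ v j = 1)
    (hposv : 0 < tinner a (tensorOp n fun j => proj (v j))) :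
    ∀ u : ∀ i, Fin (n i) → ℂ, (∀ j, star (u j) ⬝ᵥ u j = 1) →
      0 ≤ tinner a (tensorOp n fun j => proj (u j)) := by
  intro u hu
  by_contra hc
  push_neg at hc
  exact no_mixed_signs ha hstar k u v hu hv
    (le_trans (Finset.card_le_card (Finset.filter_subset _ _)) (by simp)) hc hposv

end L2



/-- For a Hermitian operator `a` on `H⁽¹⁾ ⊗ ⋯ ⊗ H⁽ᵏ⁾`, the conditions
"there exists a pure product state `p` with `Tr(a p) > 0`" and "(★): for every pure
product state `q` with `Tr(a q) = 0`, `C(q) ⊆ I_a`" together are necessary and sufficient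
for `a` to satisfy `Tr(a ϱ) ≥ 0` for all separable states `ϱ` while not vanishing on all
separable states. -/
theorem nonneg_nonvanishing_on_separables_iff {k : ℕ} (n : Fin k → ℕ)
    (a : Op n) (ha : a.IsHermitian) :
    ((∃ p : Op n, IsPureProduct n p ∧ 0 < tinner a p) ∧ StarCond n a) ↔
    ((∀ ϱ : Op n, IsSeparable n ϱ → 0 ≤ tinner a ϱ) ∧
      ¬ (∀ ϱ : Op n, IsSeparable n ϱ → tinner a ϱ = 0)) := by
  constructor
  · rintro ⟨⟨p, ⟨v, hvunit, rfl⟩, hpos⟩, hstar⟩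
    have hpure := pure_nonneg_of_star ha hstar hvunit hpos
    refine ⟨sep_nonneg_of_pure_nonneg hpure, fun hall => ?_⟩
    have := hall _ (pureProduct_isSeparable ⟨v, hvunit, rfl⟩)
    linarith
  · rintro ⟨hsep, hnz⟩
    exact ⟨exists_pure_pos hsep hnz, starCond_of_nonneg ha hsep⟩

end EWitness
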